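/- arXiv:2206.04986 — 3 statements merged into one kernel-verified Lean document; each statement's English description precedes it below -/
import Mathlib

section
/- Among all Lipschitz curves γ : [t₁,t₂] → ℝ with γ(t₁)=x₁ and γ(t₂)=x₂, the weighted action ∫_{t₁}^{t₂} f*(γ'(θ)) e^{−β(θ)} dθ is minimized by the h-curve X satisfying X'(θ) = f'(y₀ e^{β(θ)}) with X(t₁)=x₁, X(t₂)=x₂. That is, for every such γ, ∫_{t₁}^{t₂} f*(γ'(θ))e^{−β(θ)}dθ ≥ ∫_{t₁}^{t₂} f*(X'(θ))e^{−β(θ)}dθ. -/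
open Real Set Filter intervalIntegral

open MeasureTheory

/-!
Along the `h`-curve `X' = f'(c)` with `c θ = y₀ e^{β θ}`, Fenchel–Young is an equality, so for
every `u` the subgradient inequality `f*(u) ≥ f*(f'(c)) + c (u - f'(c))` holds. Multiplying by
`e^{-β θ}` turns the linear term into `y₀ (u - X')`, whose integral along `u = γ'` vanishes because
`γ` and `X` have the same endpoints (fundamental theorem of calculus for the Lipschitz curve `γ`).
-/

/-- Convex conjugate of `f`. -/
noncomputable def conjFn (f : ℝ → ℝ) (u : ℝ) : ℝ := ⨆ v : ℝ, (u * v - f v)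

section ConvexConjugate

variable {f : ℝ → ℝ}

theorem tendsto_sub_mul_cocompact_atTop
    (hsuper : Tendsto (fun u => f u / |u|) (cocompact ℝ) atTop) (u : ℝ) :
    Tendsto (fun v => f v - u * v) (cocompact ℝ) atTop := by
  have hprod : Tendsto (fun v => |v| * (f v / |v| - |u|)) (cocompact ℝ) atTop :=
    tendsto_norm_cocompact_atTop.atTop_mul_atTop₀ (tendsto_atTop_add_const_right _ _ hsuper)
  refine tendsto_atTop_mono' _ ?_ hprod
  filter_upwards [cocompact_le_cofinite (eventually_cofinite_ne 0)] with v hv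
  have hv : 0 < |v| := abs_pos.2 hv
  calc |v| * (f v / |v| - |u|) = f v - |u| * |v| := by field_simp
    _ ≤ f v - u * v := by rw [← abs_mul]; linarith [le_abs_self (u * v)]

theorem conjFn_deriv_le (hconv : ConvexOn ℝ univ f) {v : ℝ}
    (hdiff : DifferentiableAt ℝ f v) : conjFn f (deriv f v) ≤ deriv f v * v - f v := by
  refine ciSup_le fun w => ?_
  rcases lt_trichotomy w v with h | rfl | h
  · have := hconv.slope_le_deriv (mem_univ w) (mem_univ v) h hdiff
    rw [slope_def_field, div_le_iff₀ (sub_pos.2 h)] at this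
    nlinarith
  · rfl
  · have := hconv.deriv_le_slope (mem_univ v) (mem_univ w) h hdiff
    rw [slope_def_field, le_div_iff₀ (sub_pos.2 h)] at this
    nlinarith

variable (hfc : Continuous f) (hsuper : Tendsto (fun u => f u / |u|) (cocompact ℝ) atTop)
include hfc hsuper

theorem bddAbove_range_mul_sub (u : ℝ) : BddAbove (range fun v => u * v - f v) := by
  obtain ⟨v₀, hv₀⟩ := Continuous.exists_forall_le (f := fun v => f v - u * v) (by fun_prop)
    (tendsto_sub_mul_cocompact_atTop hsuper u)
  exact ⟨u * v₀ - f v₀, by rintro _ ⟨v, rfl⟩; linarith [hv₀ v]⟩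

theorem mul_sub_le_conjFn (u v : ℝ) : u * v - f v ≤ conjFn f u :=
  le_ciSup (bddAbove_range_mul_sub hfc hsuper u) v

theorem convexOn_conjFn : ConvexOn ℝ univ (conjFn f) := by
  refine ⟨convex_univ, fun x _ y _ a b ha hb hab => ciSup_le fun v => ?_⟩
  have hx := mul_le_mul_of_nonneg_left (mul_sub_le_conjFn hfc hsuper x v) ha
  have hy := mul_le_mul_of_nonneg_left (mul_sub_le_conjFn hfc hsuper y v) hb
  simp only [smul_eq_mul]
  linear_combination hx + hy + f v * hab

theorem continuous_conjFn : Continuous (conjFn f) :=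
  continuousOn_univ.1 ((convexOn_conjFn hfc hsuper).continuousOn isOpen_univ)

theorem conjFn_deriv_add_mul_sub_le (hconv : ConvexOn ℝ univ f) {v : ℝ}
    (hdiff : DifferentiableAt ℝ f v) (u : ℝ) :
    conjFn f (deriv f v) + v * (u - deriv f v) ≤ conjFn f u := by
  linarith [conjFn_deriv_le hconv hdiff, mul_sub_le_conjFn hfc hsuper u v]

end ConvexConjugate

theorem LipschitzOnWith.intervalIntegrable_comp_deriv {γ φ : ℝ → ℝ} {K : NNReal} {a b : ℝ}
    (hab : a ≤ b) (hγ : LipschitzOnWith K γ (Icc a b)) (hφ : Continuous φ) :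
    IntervalIntegrable (fun θ => φ (deriv γ θ)) volume a b := by
  obtain ⟨M, hM⟩ :=
    isCompact_Icc.exists_bound_of_continuousOn (hφ.continuousOn (s := Icc (-(K : ℝ)) K))
  rw [intervalIntegrable_iff_integrableOn_Ioo_of_le hab]
  refine IntegrableOn.of_bound measure_Ioo_lt_top
    (hφ.measurable.comp (measurable_deriv γ)).aestronglyMeasurable M ?_
  filter_upwards [ae_restrict_mem measurableSet_Ioo] with θ hθ
  refine hM _ (abs_le.1 ?_)
  simpa using norm_deriv_le_of_lipschitzOn (Icc_mem_nhds hθ.1 hθ.2) hγ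

/-- The `h`-curve minimizes the weighted action among Lipschitz curves with the
same endpoints: for every Lipschitz `γ : [t₁,t₂] → ℝ` with `γ t₁ = x₁`,
`γ t₂ = x₂`,
`∫_{t₁}^{t₂} f*(γ'(θ)) e^{-β θ} dθ ≥ ∫_{t₁}^{t₂} f*(X'(θ)) e^{-β θ} dθ`,
where `X'(θ) = f'(y₀ e^{β θ})` and `X` joins `(x₁,t₁)` to `(x₂,t₂)`. -/
theorem hcurve_minimizes (f β : ℝ → ℝ)
    (hf : ContDiff ℝ 2 f)
    (hconv : StrictConvexOn ℝ Set.univ f)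
    (hsuper : Tendsto (fun u => f u / |u|) (cocompact ℝ) atTop)
    (hβ : Continuous β)
    (t₁ t₂ x₁ x₂ y₀ : ℝ) (ht : t₁ < t₂)
    (hX : x₁ + ∫ θ in t₁..t₂, deriv f (y₀ * Real.exp (β θ)) = x₂)
    (γ : ℝ → ℝ) (K : NNReal)
    (hγ : LipschitzOnWith K γ (Set.Icc t₁ t₂))
    (hγ1 : γ t₁ = x₁) (hγ2 : γ t₂ = x₂) :
    (∫ θ in t₁..t₂, conjFn f (deriv γ θ) * Real.exp (-β θ)) ≥
      ∫ θ in t₁..t₂, conjFn f (deriv f (y₀ * Real.exp (β θ))) * Real.exp (-β θ) := by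
  have hfc : Continuous f := hf.continuous
  have hdiff : Differentiable ℝ f := hf.differentiable (by norm_num)
  have hX' : Continuous fun θ => deriv f (y₀ * exp (β θ)) :=
    (hf.continuous_deriv (by norm_num)).comp (continuous_const.mul (continuous_exp.comp hβ))
  have hweight : Continuous fun θ => exp (-β θ) := continuous_exp.comp hβ.neg
  have hγ_ac : AbsolutelyContinuousOnInterval γ t₁ t₂ :=
    (uIcc_of_le ht.le ▸ hγ).absolutelyContinuousOnInterval
  have hγ'_int : ∫ θ in t₁..t₂, deriv γ θ = ∫ θ in t₁..t₂, deriv f (y₀ * exp (β θ)) := by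
    rw [hγ_ac.integral_deriv_eq_sub, hγ1, hγ2]
    linarith
  have hγ_action_int :
      IntervalIntegrable (fun θ => conjFn f (deriv γ θ) * exp (-β θ)) volume t₁ t₂ :=
    (hγ.intervalIntegrable_comp_deriv ht.le (continuous_conjFn hfc hsuper)).mul_continuousOn
      hweight.continuousOn
  have hX_action_int : IntervalIntegrable
      (fun θ => conjFn f (deriv f (y₀ * exp (β θ))) * exp (-β θ)) volume t₁ t₂ :=
    ((continuous_conjFn hfc hsuper).comp hX').mul hweight |>.intervalIntegrable t₁ t₂
  have hdrift_int :=
    (hγ_ac.intervalIntegrable_deriv.sub (hX'.intervalIntegrable t₁ t₂)).const_mul y₀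
  rw [ge_iff_le]
  calc _ = ∫ θ in t₁..t₂, conjFn f (deriv f (y₀ * exp (β θ))) * exp (-β θ)
        + y₀ * (deriv γ θ - deriv f (y₀ * exp (β θ))) := by
        rw [intervalIntegral.integral_add hX_action_int hdrift_int,
          intervalIntegral.integral_const_mul, intervalIntegral.integral_sub
            hγ_ac.intervalIntegrable_deriv (hX'.intervalIntegrable t₁ t₂), hγ'_int]
        ring
    _ ≤ _ := by
      refine integral_mono_on ht.le (hX_action_int.add hdrift_int) hγ_action_int fun θ _ => ?_
      have hy₀ : y₀ * exp (β θ) * exp (-β θ) = y₀ := by rw [mul_assoc, ← exp_add]; simp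
      have := mul_le_mul_of_nonneg_right
        (conjFn_deriv_add_mul_sub_le hfc hsuper hconv.convexOn (hdiff (y₀ * exp (β θ))) (deriv γ θ))
        (exp_pos (-β θ)).le
      linear_combination this - (deriv γ θ - deriv f (y₀ * exp (β θ))) * hy₀
end

section
/- Let X be the h-curve joining (x₁,t₁) to (x₂,t₂), i.e., X'(θ)=f'(y₀ e^{β(θ)}) with X(t₁)=x₁, X(t₂)=x₂ and t₁<t₂. If β attains its min and max on [t₁,t₂] and y₀ ≥ 0, then (f')^{-1}((x₂−x₁)/(t₂−t₁)) / e^{max_{[t₁,t₂]} β} ≤ y₀ ≤ (f')^{-1}((x₂−x₁)/(t₂−t₁)) / e^{min_{[t₁,t₂]} β}. In general |y₀| ≤ max{ |(f')^{-1}((x₂−x₁)/(t₂−t₁))| / e^{max β}, |(f')^{-1}((x₂−x₁)/(t₂−t₁))| / e^{min β} }. -/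
open Real Set Filter intervalIntegral

/-!
Since `f` is strictly convex, `f'` is strictly increasing, so `c ≤ (f')⁻¹ s ↔ f' c ≤ s`.
The average slope `s = (x₂ - x₁)/(t₂ - t₁)` is the mean of `f'(y₀ e^β)` over `[t₁, t₂]`,
hence lies between `f'` of the extreme values of `y₀ e^β`; applying `(f')⁻¹` puts
`(f')⁻¹ s` between `y₀ e^{min β}` and `y₀ e^{max β}`, so in particular
`|(f')⁻¹ s| ≥ |y₀| e^{min β}`.
-/

theorem integral_div_sub_mem_Icc {F : ℝ → ℝ} {a b p q : ℝ} (hab : a < b)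
    (hF : IntervalIntegrable F MeasureTheory.volume a b)
    (h : ∀ θ ∈ Icc a b, F θ ∈ Icc p q) :
    (∫ θ in a..b, F θ) / (b - a) ∈ Icc p q := by
  have hba : 0 < b - a := sub_pos.2 hab
  have hlow : ∫ _ in a..b, p ≤ ∫ θ in a..b, F θ :=
    integral_mono_on hab.le intervalIntegrable_const hF fun θ hθ => (h θ hθ).1
  have hupp : ∫ θ in a..b, F θ ≤ ∫ _ in a..b, q :=
    integral_mono_on hab.le hF intervalIntegrable_const fun θ hθ => (h θ hθ).2
  rw [integral_const, smul_eq_mul] at hlow hupp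
  constructor
  · rw [le_div_iff₀ hba]; linarith
  · rw [div_le_iff₀ hba]; linarith

theorem rightInverse_integral_div_sub_mem_Icc {φ g u : ℝ → ℝ} {a b p q : ℝ}
    (hφ : StrictMono φ) (hg : ∀ x, φ (g x) = x) (hab : a < b)
    (hint : IntervalIntegrable (fun θ => φ (u θ)) MeasureTheory.volume a b)
    (hu : ∀ θ ∈ Icc a b, u θ ∈ Icc p q) :
    g ((∫ θ in a..b, φ (u θ)) / (b - a)) ∈ Icc p q := by
  have hmean := integral_div_sub_mem_Icc hab hint fun θ hθ =>
    ⟨hφ.monotone (hu θ hθ).1, hφ.monotone (hu θ hθ).2⟩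
  rw [← hg ((∫ θ in a..b, φ (u θ)) / (b - a))] at hmean
  exact ⟨hφ.le_iff_le.1 hmean.1, hφ.le_iff_le.1 hmean.2⟩

theorem abs_mul_le_abs_of_mem_uIcc {x y a b : ℝ} (ha : 0 ≤ a) (hab : a ≤ b)
    (hx : x ∈ uIcc (y * a) (y * b)) : |y| * a ≤ |x| := by
  rw [← image_const_mul_uIcc, uIcc_of_le hab] at hx
  obtain ⟨c, hc, rfl⟩ := hx
  rw [abs_mul, abs_of_nonneg (ha.trans hc.1)]
  exact mul_le_mul_of_nonneg_left hc.1 (abs_nonneg y)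

theorem mem_Icc_sInf_sSup_image {β : ℝ → ℝ} (hβ : Continuous β) {a b θ : ℝ}
    (hθ : θ ∈ Icc a b) : β θ ∈ Icc (sInf (β '' Icc a b)) (sSup (β '' Icc a b)) :=
  have hK : IsCompact (β '' Icc a b) := isCompact_Icc.image hβ
  ⟨csInf_le hK.bddBelow (mem_image_of_mem β hθ), le_csSup hK.bddAbove (mem_image_of_mem β hθ)⟩

theorem hcurve_parameter_bounds_general (f β g : ℝ → ℝ)
    (hf : ContDiff ℝ 2 f)
    (hconv : StrictConvexOn ℝ Set.univ f)
    (hβ : Continuous β)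
    (hg : ∀ x, deriv f (g x) = x)
    (t₁ t₂ x₁ x₂ y₀ : ℝ) (ht : t₁ < t₂)
    (hX : x₁ + ∫ θ in t₁..t₂, deriv f (y₀ * Real.exp (β θ)) = x₂) :
    (0 ≤ y₀ →
      g ((x₂ - x₁) / (t₂ - t₁)) / Real.exp (sSup (β '' Set.Icc t₁ t₂)) ≤ y₀ ∧
      y₀ ≤ g ((x₂ - x₁) / (t₂ - t₁)) / Real.exp (sInf (β '' Set.Icc t₁ t₂))) ∧
    |y₀| ≤ max
      (|g ((x₂ - x₁) / (t₂ - t₁))| / Real.exp (sSup (β '' Set.Icc t₁ t₂)))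
      (|g ((x₂ - x₁) / (t₂ - t₁))| / Real.exp (sInf (β '' Set.Icc t₁ t₂))) := by
  set m := sInf (β '' Icc t₁ t₂)
  set M := sSup (β '' Icc t₁ t₂)
  have hmono : StrictMono (deriv f) := fun a b hab =>
    hconv.strictMonoOn_deriv (fun x _ => (hf.differentiable two_ne_zero).differentiableAt)
      (mem_univ a) (mem_univ b) hab
  have hint : IntervalIntegrable (fun θ => deriv f (y₀ * exp (β θ))) MeasureTheory.volume t₁ t₂ :=
    ((hf.continuous_deriv one_le_two).comp (by fun_prop)).intervalIntegrable t₁ t₂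
  have hcurve : ∀ θ ∈ Icc t₁ t₂, y₀ * exp (β θ) ∈ uIcc (y₀ * exp m) (y₀ * exp M) := by
    intro θ hθ
    have hexp := exp_monotone.mapsTo_Icc (mem_Icc_sInf_sSup_image hβ hθ)
    exact image_const_mul_uIcc y₀ _ _ ▸ mem_image_of_mem _ (Icc_subset_uIcc hexp)
  have hgs : g ((x₂ - x₁) / (t₂ - t₁)) ∈ uIcc (y₀ * exp m) (y₀ * exp M) := by
    rw [← eq_sub_of_add_eq' hX]
    exact rightInverse_integral_div_sub_mem_Icc hmono hg ht hint hcurve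
  have hmM : m ≤ M :=
    have hβt₁ := mem_Icc_sInf_sSup_image hβ (left_mem_Icc.2 ht.le)
    hβt₁.1.trans hβt₁.2
  refine ⟨fun hy => ?_, ?_⟩
  · rw [uIcc_of_le (mul_le_mul_of_nonneg_left (exp_le_exp.2 hmM) hy)] at hgs
    exact ⟨(div_le_iff₀ (exp_pos M)).2 hgs.2, (le_div_iff₀ (exp_pos m)).2 hgs.1⟩
  · refine le_max_of_le_right ((le_div_iff₀ (exp_pos m)).2 ?_)
    exact abs_mul_le_abs_of_mem_uIcc (exp_pos m).le (exp_le_exp.2 hmM) hgs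

/-- Bounds on the `h`-curve parameter `y₀` in terms of the average slope
`(x₂ - x₁)/(t₂ - t₁)`, the inverse of `f'`, and the extrema of `β` on
`[t₁,t₂]`. Here `g` denotes the inverse of `f'`. -/
theorem hcurve_parameter_bounds (f β g : ℝ → ℝ)
    (hf : ContDiff ℝ 2 f)
    (hconv : StrictConvexOn ℝ Set.univ f)
    (hsuper : Tendsto (fun u => f u / |u|) (cocompact ℝ) atTop)
    (hβ : Continuous β)
    (hg : ∀ x, deriv f (g x) = x) (hg' : ∀ x, g (deriv f x) = x)
    (t₁ t₂ x₁ x₂ y₀ : ℝ) (ht : t₁ < t₂)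
    (hX : x₁ + ∫ θ in t₁..t₂, deriv f (y₀ * Real.exp (β θ)) = x₂) :
    (0 ≤ y₀ →
      g ((x₂ - x₁) / (t₂ - t₁)) / Real.exp (sSup (β '' Set.Icc t₁ t₂)) ≤ y₀ ∧
      y₀ ≤ g ((x₂ - x₁) / (t₂ - t₁)) / Real.exp (sInf (β '' Set.Icc t₁ t₂))) ∧
    |y₀| ≤ max
      (|g ((x₂ - x₁) / (t₂ - t₁))| / Real.exp (sSup (β '' Set.Icc t₁ t₂)))
      (|g ((x₂ - x₁) / (t₂ - t₁))| / Real.exp (sInf (β '' Set.Icc t₁ t₂))) :=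
  hcurve_parameter_bounds_general f β g hf hconv hβ hg t₁ t₂ x₁ x₂ y₀ ht hX
end

section
/- Existence of a minimizer for the initial functional: there exists ȳ ∈ H_I(x,t) such that A(x,t) = ∫₀ᵗ e^{−β(θ)} f*(f'(h(x−ȳ,t) e^{β(θ)})) dθ + U₀(ȳ), where A(x,t) = inf_{y ∈ H_I} A(y,x,t). -/
/-! The admissible set `H_I(x,t)` is closed, and its constraint at `τ = t` reads
`x - y ≥ 0` by the defining property of `h`, so `H_I ⊆ [0, x]` is compact. The
functional is continuous: by the Fenchel equality `f*(f'(w)) = w f'(w) - f(w)`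
the integrand depends continuously on `(y, θ)`, and `U₀` is the primitive of a
bounded function. A continuous function on a nonempty compact set attains its
infimum. -/

open Real Set Filter intervalIntegral

lemma ConvexOn.deriv_mul_sub_le_sub {f : ℝ → ℝ} (hconv : ConvexOn ℝ univ f) {w : ℝ}
    (hd : DifferentiableAt ℝ f w) (v : ℝ) : deriv f w * (v - w) ≤ f v - f w := by
  rcases lt_trichotomy v w with hvw | rfl | hwv
  · have hslope := hconv.slope_le_deriv (mem_univ v) (mem_univ w) hvw hd
    rw [slope_def_field, div_le_iff₀ (sub_pos.mpr hvw)] at hslope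
    linarith
  · simp
  · have hslope := hconv.deriv_le_slope (mem_univ w) (mem_univ v) hwv hd
    rw [slope_def_field, le_div_iff₀ (sub_pos.mpr hwv)] at hslope
    linarith

lemma conjFn_deriv {f : ℝ → ℝ} (hconv : ConvexOn ℝ univ f) {w : ℝ}
    (hd : DifferentiableAt ℝ f w) : conjFn f (deriv f w) = deriv f w * w - f w := by
  have hle : ∀ v, deriv f w * v - f v ≤ deriv f w * w - f w := fun v => by
    linarith [hconv.deriv_mul_sub_le_sub hd v]
  exact le_antisymm (ciSup_le hle) (le_ciSup ⟨_, forall_mem_range.mpr hle⟩ w)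

lemma continuous_conjFn_deriv {f : ℝ → ℝ} (hconv : ConvexOn ℝ univ f) (hf : ContDiff ℝ 1 f) :
    Continuous fun w => conjFn f (deriv f w) := by
  have hd : Differentiable ℝ f := hf.differentiable one_ne_zero
  simp_rw [conjFn_deriv hconv (hd _)]
  exact ((hf.continuous_deriv le_rfl).mul continuous_id).sub hf.continuous

lemma continuous_primitive_of_bounded {u : ℝ → ℝ} (hu : ∃ M, ∀ y, |u y| ≤ M)
    (hum : Measurable u) : Continuous fun y => ∫ z in (0:ℝ)..y, u z := by
  obtain ⟨M, hM⟩ := hu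
  refine continuous_primitive (fun a b => ?_) 0
  exact intervalIntegrable_const.mono_fun' hum.aestronglyMeasurable
    (MeasureTheory.ae_of_all _ fun z => by simpa only [Real.norm_eq_abs] using hM z)

section InitialFunctional

variable {f β u₀ h : ℝ → ℝ} {x t : ℝ}

noncomputable def initialFunctional (f β u₀ h : ℝ → ℝ) (x t : ℝ) (y : ℝ) : ℝ :=
  (∫ θ in (0:ℝ)..t, Real.exp (-β θ) * conjFn f (deriv f (h (x - y) * Real.exp (β θ)))) +
    ∫ z in (0:ℝ)..y, u₀ z

def admissibleSet (f β h : ℝ → ℝ) (x t : ℝ) : Set ℝ :=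
  {y | 0 ≤ y ∧ ∀ τ ∈ Set.Icc (0:ℝ) t,
    0 ≤ ∫ θ in (0:ℝ)..τ, deriv f (h (x - y) * Real.exp (β θ))}

lemma continuous_comp_hCurve {g : ℝ → ℝ} (hg : Continuous g) (hβ : Continuous β)
    (hh : Continuous h) : Continuous fun p : ℝ × ℝ => g (h (x - p.1) * Real.exp (β p.2)) := by
  fun_prop

lemma continuous_initialFunctional (hf : ContDiff ℝ 1 f) (hconv : ConvexOn ℝ univ f)
    (hβ : Continuous β) (hh : Continuous h) (hu₀ : ∃ M, ∀ y, |u₀ y| ≤ M)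
    (hu₀m : Measurable u₀) : Continuous (initialFunctional f β u₀ h x t) := by
  refine Continuous.add ?_ (continuous_primitive_of_bounded hu₀ hu₀m)
  refine continuous_parametric_intervalIntegral_of_continuous' ?_ 0 t
  exact (hβ.comp continuous_snd).neg.rexp.mul
    (continuous_comp_hCurve (continuous_conjFn_deriv hconv hf) hβ hh)

lemma isClosed_admissibleSet (hf' : Continuous (deriv f)) (hβ : Continuous β)
    (hh : Continuous h) : IsClosed (admissibleSet f β h x t) := by
  simp only [admissibleSet, ofPred_and, ofPred_forall]
  refine (isClosed_le continuous_const continuous_id).inter <|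
    isClosed_biInter fun τ _ => isClosed_le continuous_const ?_
  exact continuous_parametric_intervalIntegral_of_continuous'
    (continuous_comp_hCurve hf' hβ hh) 0 τ

lemma admissibleSet_subset_Icc (ht : 0 ≤ t)
    (hh : ∀ w : ℝ, w = ∫ θ in (0:ℝ)..t, deriv f (h w * Real.exp (β θ))) :
    admissibleSet f β h x t ⊆ Icc 0 x := fun y ⟨hy, hτ⟩ => by
  have hxy := hτ t ⟨ht, le_rfl⟩
  rw [← hh (x - y)] at hxy
  exact ⟨hy, by linarith⟩

end InitialFunctional

theorem initial_functional_minimizer_exists_general (f β u₀ h : ℝ → ℝ)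
    (hf : ContDiff ℝ 2 f)
    (hconv : StrictConvexOn ℝ Set.univ f)
    (hβ : Continuous β)
    (hu₀ : ∃ M, ∀ y, |u₀ y| ≤ M) (hu₀m : Measurable u₀)
    (x t : ℝ) (ht : 0 < t)
    (hh : ∀ w : ℝ, w = ∫ θ in (0:ℝ)..t, deriv f (h w * Real.exp (β θ)))
    (hhcont : Continuous h) :
    let A : ℝ → ℝ := fun y =>
      (∫ θ in (0:ℝ)..t,
        Real.exp (-β θ) * conjFn f (deriv f (h (x - y) * Real.exp (β θ)))) +
      ∫ z in (0:ℝ)..y, u₀ z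
    let HI : Set ℝ := {y | 0 ≤ y ∧ ∀ τ ∈ Set.Icc (0:ℝ) t,
      0 ≤ ∫ θ in (0:ℝ)..τ, deriv f (h (x - y) * Real.exp (β θ))}
    HI.Nonempty → ∃ ybar ∈ HI, A ybar = sInf (A '' HI) := by
  intro A HI hne
  have hcompact : IsCompact HI :=
    isCompact_Icc.of_isClosed_subset
      (isClosed_admissibleSet (hf.continuous_deriv (by norm_num)) hβ hhcont)
      (admissibleSet_subset_Icc ht.le hh)
  have hA : Continuous A :=
    continuous_initialFunctional (hf.of_le (by norm_num)) hconv.convexOn hβ hhcont hu₀ hu₀m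
  obtain ⟨ybar, hmem, hmin⟩ := hcompact.exists_sInf_image_eq hne hA.continuousOn
  exact ⟨ybar, hmem, hmin.symm⟩

/-- Existence of a minimizer of the initial functional
`A(y,x,t) = ∫₀ᵗ e^{-β θ} f*(f'(h(x-y,t) e^{β θ})) dθ + U₀(y)` over the
admissible set `H_I(x,t)`: there is `ȳ ∈ H_I` with `A(ȳ,x,t) = inf_{H_I} A`.
Here `h w` is the `h`-curve parameter for displacement `w` in time `t`, and
`U₀(y) = ∫₀^y u₀`. -/
theorem initial_functional_minimizer_exists (f β u₀ h : ℝ → ℝ)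
    (hf : ContDiff ℝ 2 f)
    (hconv : StrictConvexOn ℝ Set.univ f)
    (hsuper : Tendsto (fun u => f u / |u|) (cocompact ℝ) atTop)
    (hβ : Continuous β)
    (hu₀ : ∃ M, ∀ y, |u₀ y| ≤ M) (hu₀m : Measurable u₀)
    (x t : ℝ) (hx : 0 ≤ x) (ht : 0 < t)
    (hh : ∀ w : ℝ, w = ∫ θ in (0:ℝ)..t, deriv f (h w * Real.exp (β θ)))
    (hhcont : Continuous h) :
    let A : ℝ → ℝ := fun y =>
      (∫ θ in (0:ℝ)..t,
        Real.exp (-β θ) * conjFn f (deriv f (h (x - y) * Real.exp (β θ)))) +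
      ∫ z in (0:ℝ)..y, u₀ z
    let HI : Set ℝ := {y | 0 ≤ y ∧ ∀ τ ∈ Set.Icc (0:ℝ) t,
      0 ≤ ∫ θ in (0:ℝ)..τ, deriv f (h (x - y) * Real.exp (β θ))}
    HI.Nonempty → ∃ ybar ∈ HI, A ybar = sInf (A '' HI) :=
  initial_functional_minimizer_exists_general f β u₀ h hf hconv hβ hu₀ hu₀m x t ht hh hhcont
end
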